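/- Let T* be any query tree whose leaves are H and let T^g be the greedy query tree for π. Then for every version space S ⊆ H arising in the greedy construction (with corresponding subtree T^g_S), C(T^g_S, π_S) ≤ 12 · C(T*, π_S) · ln( π(S) / min_{h∈S} π(h) ). -/

import Mathlib

/-!
Progress is measured by the pair mass `pairMass π S = π(S)² - Σ_{s ∈ S} π(s)²`. The mass of pairs
a question separates, per unit of version-space mass, can only grow with the version space. So if
the greedy question separates at rate `r` per unit cost, no question does better on any
sub-version-space, and every tree, in particular `T*`, pays at least `pairMass / r` to separate
all pairs of `S`. Hence the greedy root costs at most the fraction `δ = sepMass / pairMass` of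
`C(T*)`, while every child keeps at most `(1 - δ) · pairMass`, which lowers the potential
`log (max pairMass (μ² / 2) / (μ² / 2))` by at least `δ`. Induction gives
`C(T^g_S) ≤ C(T*) · potential`, and `pairMass ≤ π(S) (π(S) - μ)` bounds the potential by
`3 · log (π(S) / μ)`, with `μ = min_{h ∈ S} π(h)`.
-/
open Finset

namespace ActiveLearning

variable {H A : Type*} {m : ℕ}

/-- The total mass of a weight function `v` on a finite set `S`. -/
def mass (v : H → ℝ) (S : Finset H) : ℝ := ∑ s ∈ S, v s

/-- `v` restricted to `S` and normalized. -/
noncomputable def restrict [DecidableEq H] (v : H → ℝ) (S : Finset H) : H → ℝ :=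
  fun h => if h ∈ S then v h / mass v S else 0

/-- The shrinkage `Δ` of a question `qi` on `(S, v)`. -/
noncomputable def shrink [Fintype A] [DecidableEq A] (qi : H → A)
    (S : Finset H) (v : H → ℝ) : ℝ :=
  mass v S - ∑ j : A, (mass v (S.filter fun s => qi s = j)) ^ 2 / mass v S

/-- The collision probability of a distribution `v`. -/
def CP [Fintype H] (v : H → ℝ) : ℝ := ∑ z : H, (v z) ^ 2

/-- Query trees: internal nodes are questions (indexed by `Fin m`), branches are answers,
leaves are hypotheses. -/
inductive QTree (m : ℕ) (H A : Type*) : Type _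
  | leaf : H → QTree m H A
  | node : Fin m → (A → QTree m H A) → QTree m H A

/-- Follow the answers of hypothesis `h` down the tree, returning the leaf reached. -/
def follow (q : Fin m → H → A) : QTree m H A → H → H
  | .leaf h', _ => h'
  | .node i ch, h => follow q (ch (q i h)) h

/-- The cost `c_T(h)`: sum of costs of the questions on the root-to-`h` path. -/
def pathCost (q : Fin m → H → A) (c : Fin m → ℝ) : QTree m H A → H → ℝ
  | .leaf _, _ => 0
  | .node i ch, h => c i + pathCost q c (ch (q i h)) h

/-- The leaves of `T` include `S`: every `h ∈ S` is identified by `T`. -/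
def ValidOn (q : Fin m → H → A) (T : QTree m H A) (S : Finset H) : Prop :=
  ∀ h ∈ S, follow q T h = h

/-- The expected cost `C(T, v)` of a query tree `T` under weights `v`. -/
noncomputable def treeCost [Fintype H] (q : Fin m → H → A) (c : Fin m → ℝ)
    (T : QTree m H A) (v : H → ℝ) : ℝ :=
  ∑ h : H, v h * pathCost q c T h

/-- The questions asked along the root-to-`h` path. -/
def pathQs (q : Fin m → H → A) : QTree m H A → H → List (Fin m)
  | .leaf _, _ => []
  | .node i ch, h => i :: pathQs q (ch (q i h)) h

/-- `T` is a greedy query tree for `π` on version space `S`: at every node it asks a question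
maximizing the shrinkage-cost ratio and recurses on each nonempty answer class. -/
inductive IsGreedy [Fintype A] [DecidableEq A] [DecidableEq H]
    (q : Fin m → H → A) (c : Fin m → ℝ) (π : H → ℝ) :
    QTree m H A → Finset H → Prop
  | leaf (h : H) : IsGreedy q c π (.leaf h) {h}
  | node (S : Finset H) (i : Fin m) (ch : A → QTree m H A)
      (hcard : 1 < S.card)
      (hmax : ∀ j : Fin m,
        shrink (q j) S (restrict π S) / c j ≤ shrink (q i) S (restrict π S) / c i)
      (hch : ∀ a : A, (S.filter fun s => q i s = a).Nonempty →
        IsGreedy q c π (ch a) (S.filter fun s => q i s = a)) :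
      IsGreedy q c π (.node i ch) S

/-- `T` is an `ε`-approximate greedy query tree for `π` on version space `S`. -/
inductive IsApproxGreedy [Fintype A] [DecidableEq A] [DecidableEq H]
    (ε : ℝ) (q : Fin m → H → A) (c : Fin m → ℝ) (π : H → ℝ) :
    QTree m H A → Finset H → Prop
  | leaf (h : H) : IsApproxGreedy ε q c π (.leaf h) {h}
  | node (S : Finset H) (i : Fin m) (ch : A → QTree m H A)
      (hcard : 1 < S.card)
      (happrox : ∀ j : Fin m,
        (1 - ε) * (shrink (q j) S (restrict π S) / c j) ≤
          shrink (q i) S (restrict π S) / c i)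
      (hch : ∀ a : A, (S.filter fun s => q i s = a).Nonempty →
        IsApproxGreedy ε q c π (ch a) (S.filter fun s => q i s = a)) :
      IsApproxGreedy ε q c π (.node i ch) S

/-- `T` is irreducible on version space `S`: every asked question strictly splits the
surviving set. -/
inductive Irreducible [DecidableEq A] (q : Fin m → H → A) :
    QTree m H A → Finset H → Prop
  | leaf (h : H) (S : Finset H) : Irreducible q (.leaf h) S
  | node (S : Finset H) (i : Fin m) (ch : A → QTree m H A)
      (hsplit : ∃ s ∈ S, ∃ t ∈ S, q i s ≠ q i t)
      (hch : ∀ a : A, (S.filter fun s => q i s = a).Nonempty →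
        Irreducible q (ch a) (S.filter fun s => q i s = a)) :
      Irreducible q (.node i ch) S

section PairMass

variable {π : H → ℝ}

variable (π) in
/-- The mass of ordered pairs of distinct elements of `S`. -/
def pairMass (S : Finset H) : ℝ := mass π S ^ 2 - ∑ s ∈ S, π s ^ 2

lemma mass_nonneg (hπ : ∀ h, 0 ≤ π h) (S : Finset H) : 0 ≤ mass π S :=
  sum_nonneg fun h _ => hπ h

lemma le_mass_of_forall_le {μ : ℝ} {S : Finset H} (hS : S.Nonempty) (hμ : 0 ≤ μ)
    (hmin : ∀ h ∈ S, μ ≤ π h) : μ ≤ mass π S := by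
  obtain ⟨s, hs⟩ := hS
  exact (hmin s hs).trans (single_le_sum (fun h hh => hμ.trans (hmin h hh)) hs)

lemma mass_insert [DecidableEq H] {x : H} {S : Finset H} (hx : x ∉ S) :
    mass π (insert x S) = mass π S + π x := by
  rw [mass, sum_insert hx, add_comm, mass]

lemma mass_filter_insert [DecidableEq H] [DecidableEq A] (g : H → A) {x : H} {S : Finset H}
    (hx : x ∉ S) (a : A) : mass π ((insert x S).filter fun s => g s = a) =
      mass π (S.filter fun s => g s = a) + if g x = a then π x else 0 := by
  rw [filter_insert]
  split_ifs
  · exact mass_insert (by simp [hx])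
  · rw [add_zero]

lemma pairMass_nonneg (hπ : ∀ h, 0 ≤ π h) (S : Finset H) : 0 ≤ pairMass π S :=
  sub_nonneg.2 (sum_sq_le_sq_sum_of_nonneg fun h _ => hπ h)

lemma pairMass_eq_sum_mul_sub (S : Finset H) :
    pairMass π S = ∑ s ∈ S, π s * (mass π S - π s) := by
  simp only [pairMass, mul_sub, sum_sub_distrib, ← sum_mul, mass, sq]

lemma pairMass_le_mass_mul_sub {μ : ℝ} {S : Finset H} (hmin : ∀ h ∈ S, μ ≤ π h)
    (hμ : 0 ≤ μ) : pairMass π S ≤ mass π S * (mass π S - μ) := by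
  rw [pairMass_eq_sum_mul_sub, mass, sum_mul]
  gcongr with s hs
  · exact hμ.trans (hmin s hs)
  · exact hmin s hs

lemma two_mul_sq_le_pairMass [DecidableEq H] (hπ : ∀ h, 0 ≤ π h) {μ : ℝ} {S : Finset H}
    (hS : 1 < S.card) (hmin : ∀ h ∈ S, μ ≤ π h) (hμ : 0 ≤ μ) : 2 * μ ^ 2 ≤ pairMass π S := by
  obtain ⟨a, ha, b, hb, hab⟩ := one_lt_card.1 hS
  have hpair : {a, b} ⊆ S := insert_subset ha (singleton_subset_iff.2 hb)
  have hab_le : π a + π b ≤ mass π S := by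
    simpa [mass, sum_pair hab] using sum_le_sum_of_subset_of_nonneg hpair fun i _ _ => hπ i
  have hterms : π a * (mass π S - π a) + π b * (mass π S - π b) ≤ pairMass π S := by
    rw [pairMass_eq_sum_mul_sub, ← sum_pair hab (f := fun s => π s * (mass π S - π s))]
    refine sum_le_sum_of_subset_of_nonneg hpair fun s hs _ => mul_nonneg (hπ s) ?_
    exact sub_nonneg.2 (single_le_sum (fun i _ => hπ i) hs)
  nlinarith [hmin a ha, hmin b hb]

end PairMass

section SepMass

variable [Fintype A] [DecidableEq A] {π : H → ℝ}

variable (π) in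
/-- The mass of ordered pairs of elements of `S` separated by the question `g`. -/
def sepMass (g : H → A) (S : Finset H) : ℝ :=
  mass π S ^ 2 - ∑ a : A, mass π (S.filter fun s => g s = a) ^ 2

lemma sum_mass_filter (g : H → A) (S : Finset H) :
    ∑ a : A, mass π (S.filter fun s => g s = a) = mass π S :=
  sum_fiberwise S g π

lemma sepMass_nonneg (hπ : ∀ h, 0 ≤ π h) (g : H → A) (S : Finset H) : 0 ≤ sepMass π g S := by
  have := sum_sq_le_sq_sum_of_nonneg (s := univ) fun a _ =>
    mass_nonneg hπ (S.filter fun s => g s = a)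
  rw [sum_mass_filter] at this
  exact sub_nonneg.2 this

lemma sepMass_le_sq_mass (g : H → A) (S : Finset H) : sepMass π g S ≤ mass π S ^ 2 :=
  sub_le_self _ (sum_nonneg fun _ _ => sq_nonneg _)

lemma pairMass_eq_sum_add_sepMass (g : H → A) (S : Finset H) :
    pairMass π S = ∑ a : A, pairMass π (S.filter fun s => g s = a) + sepMass π g S := by
  simp only [pairMass, sepMass, sum_sub_distrib, sum_fiberwise S g fun s => π s ^ 2]
  ring

lemma pairMass_filter_le_sub_sepMass (hπ : ∀ h, 0 ≤ π h) (g : H → A) (S : Finset H) (a : A) :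
    pairMass π (S.filter fun s => g s = a) ≤ pairMass π S - sepMass π g S := by
  rw [pairMass_eq_sum_add_sepMass g S, add_sub_cancel_right]
  exact single_le_sum (f := fun b => pairMass π (S.filter fun s => g s = b))
    (fun b _ => pairMass_nonneg hπ _) (mem_univ a)

lemma sepMass_le_two_mul_mass_mul_sub (g : H → A) (S : Finset H) (a : A) :
    sepMass π g S ≤ 2 * mass π S * (mass π S - mass π (S.filter fun s => g s = a)) := by
  have := single_le_sum (f := fun b => mass π (S.filter fun s => g s = b) ^ 2)
    (fun b _ => sq_nonneg _) (mem_univ a)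
  simp only [sepMass]
  nlinarith [sq_nonneg (mass π S - mass π (S.filter fun s => g s = a))]

variable [DecidableEq H]

lemma sepMass_insert (g : H → A) {x : H} {S : Finset H} (hx : x ∉ S) :
    sepMass π g (insert x S) =
      sepMass π g S + 2 * π x * (mass π S - mass π (S.filter fun s => g s = g x)) := by
  have hsq : ∀ a : A, mass π ((insert x S).filter fun s => g s = a) ^ 2 =
      mass π (S.filter fun s => g s = a) ^ 2 +
        if g x = a then 2 * π x * mass π (S.filter fun s => g s = a) + π x ^ 2 else 0 := by
    intro a
    rw [mass_filter_insert g hx]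
    split_ifs <;> ring
  rw [sepMass, sepMass, sum_congr rfl fun a _ => hsq a, sum_add_distrib, sum_ite_eq,
    if_pos (mem_univ _), mass_insert hx]
  ring

lemma sepMass_div_mass_le_insert (hπ : ∀ h, 0 ≤ π h) (g : H → A) (x : H) (S : Finset H) :
    sepMass π g S / mass π S ≤ sepMass π g (insert x S) / mass π (insert x S) := by
  by_cases hx : x ∈ S
  · rw [insert_eq_of_mem hx]
  rcases (mass_nonneg hπ S).eq_or_lt with hM | hM
  · rw [← hM, div_zero]
    exact div_nonneg (sepMass_nonneg hπ g _) (mass_nonneg hπ _)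
  rw [div_le_div_iff₀ hM (by rw [mass_insert hx]; linarith [hπ x]), sepMass_insert g hx,
    mass_insert hx]
  nlinarith [mul_le_mul_of_nonneg_left (sepMass_le_two_mul_mass_mul_sub (π := π) g S (g x)) (hπ x)]

lemma sepMass_div_mass_mono (hπ : ∀ h, 0 ≤ π h) (g : H → A) :
    Monotone fun S : Finset H => sepMass π g S / mass π S :=
  monotone_iff_forall_le_insert.2 fun S x _ => sepMass_div_mass_le_insert hπ g x S

end SepMass

section Restrict

variable [DecidableEq H] {π : H → ℝ}

lemma mass_restrict {S T : Finset H} (hT : T ⊆ S) :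
    mass (restrict π S) T = mass π T / mass π S := by
  rw [mass, mass, sum_div]
  exact sum_congr rfl fun s hs => if_pos (hT hs)

lemma shrink_restrict [Fintype A] [DecidableEq A] (g : H → A) (S : Finset H) :
    shrink g S (restrict π S) = sepMass π g S / mass π S ^ 2 := by
  simp only [shrink, sepMass, mass_restrict subset_rfl,
    mass_restrict (filter_subset (fun s => g s = _) S)]
  rcases eq_or_ne (mass π S) 0 with hM | hM
  · simp [hM]
  · simp only [div_self hM, div_one, div_pow, ← sum_div, one_sub_div (pow_ne_zero 2 hM)]

end Restrict

section Trees

variable {π : H → ℝ} (q : Fin m → H → A) (c : Fin m → ℝ)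

/-- `π(S) · C(T, π_S)`. -/
def costOn (T : QTree m H A) (π : H → ℝ) (S : Finset H) : ℝ :=
  ∑ h ∈ S, π h * pathCost q c T h

lemma treeCost_restrict [Fintype H] [DecidableEq H] (T : QTree m H A) (S : Finset H) :
    treeCost q c T (restrict π S) = costOn q c T π S / mass π S := by
  rw [treeCost, costOn, sum_div, ← sum_subset (subset_univ S) fun h _ hh => by simp [restrict, hh]]
  refine sum_congr rfl fun h hh => ?_
  rw [restrict, if_pos hh, div_mul_eq_mul_div]

lemma pathCost_nonneg {c : Fin m → ℝ} (hc : ∀ i, 0 ≤ c i) (T : QTree m H A) (h : H) :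
    0 ≤ pathCost q c T h := by
  induction T with
  | leaf => exact le_rfl
  | node i ch ih => exact add_nonneg (hc i) (ih _)

lemma costOn_nonneg {c : Fin m → ℝ} (hπ : ∀ h, 0 ≤ π h) (hc : ∀ i, 0 ≤ c i) (T : QTree m H A)
    (S : Finset H) : 0 ≤ costOn q c T π S :=
  sum_nonneg fun h _ => mul_nonneg (hπ h) (pathCost_nonneg q hc T h)

lemma costOn_leaf (h' : H) (S : Finset H) : costOn q c (.leaf h') π S = 0 := by
  simp [costOn, pathCost]

lemma ValidOn.filter_node [DecidableEq A] {i : Fin m} {ch : A → QTree m H A} {S : Finset H}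
    (hT : ValidOn q (.node i ch) S) (a : A) :
    ValidOn q (ch a) (S.filter fun s => q i s = a) := fun h hh => by
  rw [mem_filter] at hh
  simpa [follow, hh.2] using hT h hh.1

variable [Fintype A] [DecidableEq A]

lemma sum_costOn_filter (T : QTree m H A) (g : H → A) (S : Finset H) :
    ∑ a : A, costOn q c T π (S.filter fun s => g s = a) = costOn q c T π S :=
  sum_fiberwise S g _

lemma costOn_node (i : Fin m) (ch : A → QTree m H A) (S : Finset H) :
    costOn q c (.node i ch) π S =
      c i * mass π S + ∑ a : A, costOn q c (ch a) π (S.filter fun s => q i s = a) := by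
  simp only [costOn, pathCost, mul_add, sum_add_distrib, ← sum_mul, mass, mul_comm (c i)]
  rw [← sum_fiberwise S (q i) fun h => π h * pathCost q c (ch (q i h)) h]
  congr 1
  exact sum_congr rfl fun a _ => sum_congr rfl fun h hh => by rw [(mem_filter.1 hh).2]

/-- Every pair of `S` is separated at some node of `T`, and by `sepMass_div_mass_mono` no node
separates more than `r` per unit of cost and of mass. -/
theorem pairMass_le_mul_costOn [DecidableEq H] (hπ : ∀ h, 0 ≤ π h) {r : ℝ} (T : QTree m H A)
    {S : Finset H} (hT : ValidOn q T S) (hr : ∀ k, sepMass π (q k) S / mass π S ≤ r * c k) :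
    pairMass π S ≤ r * costOn q c T π S := by
  induction T generalizing S with
  | leaf h' =>
    have hS : S ⊆ {h'} := fun h hh => by simpa [follow, eq_comm] using hT h hh
    rcases subset_singleton_iff.1 hS with rfl | rfl <;> simp [pairMass, mass, costOn_leaf]
  | node k ch ih =>
    have hroot : sepMass π (q k) S ≤ r * (c k * mass π S) := by
      have hM : mass π S = 0 → sepMass π (q k) S = 0 := fun hM =>
        le_antisymm (by simpa [hM] using sepMass_le_sq_mass (π := π) (q k) S)
          (sepMass_nonneg hπ _ _)
      rw [← mul_assoc, ← div_mul_cancel_of_imp hM]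
      exact mul_le_mul_of_nonneg_right (hr k) (mass_nonneg hπ S)
    have hchild (a : A) := ih a (hT.filter_node q a) fun k' =>
      (sepMass_div_mass_mono hπ (q k') (filter_subset _ S)).trans (hr k')
    rw [costOn_node, pairMass_eq_sum_add_sepMass (q k) S, mul_add, mul_sum, add_comm]
    exact add_le_add hroot (sum_le_sum fun a _ => hchild a)

end Trees

lemma one_le_log_four : 1 ≤ Real.log 4 := by
  rw [Real.le_log_iff_exp_le (by norm_num)]
  linarith [Real.exp_one_lt_d9]

/-- Below the floor `p` the potential vanishes; `4 * p ≤ P` and `1 ≤ log 4` pay for the drop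
`D / P ≤ 1` in that case. -/
lemma log_max_div_le_sub {p P D x : ℝ} (hp : 0 < p) (hP : 4 * p ≤ P) (hx : 0 ≤ x)
    (hxP : x ≤ P - D) : Real.log (max x p / p) ≤ Real.log (P / p) - D / P := by
  have hP0 : 0 < P := by linarith
  rcases le_or_gt x p with hxp | hxp
  · rw [max_eq_right hxp, div_self hp.ne', Real.log_one]
    have h4 : 4 ≤ P / p := (le_div_iff₀ hp).2 (by linarith)
    have hDP : D / P ≤ 1 := (div_le_one hP0).2 (by linarith)
    linarith [one_le_log_four, Real.log_le_log (by norm_num) h4]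
  · have hD : 0 < 1 - D / P := by rw [sub_pos, div_lt_one hP0]; linarith
    rw [max_eq_left hxp.le]
    calc Real.log (x / p) ≤ Real.log ((P - D) / p) :=
          Real.log_le_log (div_pos (hp.trans hxp) hp) (div_le_div_of_nonneg_right hxP hp.le)
      _ = Real.log (P / p * (1 - D / P)) := by
          congr 1
          field_simp
      _ = Real.log (P / p) + Real.log (1 - D / P) :=
          Real.log_mul (by positivity) hD.ne'
      _ ≤ Real.log (P / p) - D / P := by linarith [Real.log_le_sub_one_of_pos hD]

lemma log_max_pairMass_div_le {π : H → ℝ} {μ : ℝ} {S : Finset H} (hμ : 0 < μ) (hS : S.Nonempty)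
    (hmin : ∀ h ∈ S, μ ≤ π h) :
    Real.log (max (pairMass π S) (μ ^ 2 / 2) / (μ ^ 2 / 2)) ≤ 3 * Real.log (mass π S / μ) := by
  have hμM := le_mass_of_forall_le hS hμ.le hmin
  have hcube : (mass π S / μ) ^ 3 * (μ ^ 2 / 2) = mass π S ^ 3 / (2 * μ) := by
    field_simp
  calc Real.log (max (pairMass π S) (μ ^ 2 / 2) / (μ ^ 2 / 2))
      ≤ Real.log ((mass π S / μ) ^ 3) :=
        Real.log_le_log (by positivity) ((div_le_iff₀ (by positivity)).2 (max_le ?_ ?_))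
    _ = 3 * Real.log (mass π S / μ) := by norm_num [Real.log_pow]
  · rw [hcube, le_div_iff₀ (by positivity)]
    nlinarith [pairMass_le_mass_mul_sub hmin hμ.le,
      mul_nonneg (hμ.le.trans hμM) (add_nonneg (sq_nonneg (mass π S - μ)) (sq_nonneg μ))]
  · exact le_mul_of_one_le_left (by positivity) (one_le_pow₀ ((one_le_div hμ).2 hμM))

section Greedy

variable [DecidableEq H] [Fintype A] [DecidableEq A] {π : H → ℝ}

lemma sepMass_div_mass_le_of_shrink_div_le {g g' : H → A} {S : Finset H} {b b' : ℝ}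
    (hM : 0 < mass π S) (hb : 0 < b) (hb' : 0 < b')
    (h : shrink g S (restrict π S) / b ≤ shrink g' S (restrict π S) / b') :
    sepMass π g S / mass π S ≤ sepMass π g' S / (b' * mass π S) * b := by
  rw [shrink_restrict, shrink_restrict, div_div, div_div,
    div_le_div_iff₀ (by positivity) (by positivity)] at h
  rw [div_mul_eq_mul_div, div_le_div_iff₀ hM (by positivity)]
  nlinarith

variable (q : Fin m → H → A) (c : Fin m → ℝ)

theorem costOn_greedy_le (hπ : ∀ h, 0 ≤ π h) (hc : ∀ i, 0 < c i) {Tstar : QTree m H A}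
    {μ : ℝ} (hμ : 0 < μ) {Tg : QTree m H A} {S : Finset H} (hTg : IsGreedy q c π Tg S)
    (hTstar : ValidOn q Tstar S) (hmin : ∀ h ∈ S, μ ≤ π h) :
    costOn q c Tg π S ≤
      costOn q c Tstar π S * Real.log (max (pairMass π S) (μ ^ 2 / 2) / (μ ^ 2 / 2)) := by
  have hp : 0 < μ ^ 2 / 2 := by positivity
  induction hTg with
  | leaf h =>
    simp [costOn_leaf, pairMass, mass, max_eq_right hp.le, div_self hp.ne']
  | node S i ch hcard hmax _ ih =>
    set P := pairMass π S
    set D := sepMass π (q i) S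
    set OPT := costOn q c Tstar π S
    have hP : 4 * (μ ^ 2 / 2) ≤ P := by linarith [two_mul_sq_le_pairMass hπ hcard hmin hμ.le]
    have hP0 : 0 < P := by linarith
    have hM : 0 < mass π S :=
      hμ.trans_le (le_mass_of_forall_le (card_pos.1 (zero_lt_one.trans hcard)) hμ.le hmin)
    have hroot : c i * mass π S ≤ D / P * OPT := by
      have := pairMass_le_mul_costOn q c hπ Tstar hTstar (r := D / (c i * mass π S)) fun k =>
        sepMass_div_mass_le_of_shrink_div_le hM (hc k) (hc i) (hmax k)
      rw [div_mul_eq_mul_div, le_div_iff₀ (mul_pos (hc i) hM)] at this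
      rw [div_mul_eq_mul_div, le_div_iff₀ hP0]
      linarith
    have hchild (a : A) : costOn q c (ch a) π (S.filter fun s => q i s = a) ≤
        costOn q c Tstar π (S.filter fun s => q i s = a) *
          (Real.log (P / (μ ^ 2 / 2)) - D / P) := by
      rcases (S.filter fun s => q i s = a).eq_empty_or_nonempty with he | hne
      · simp [he, costOn]
      refine (ih a hne (fun h hh => hTstar h (filter_subset _ S hh))
        fun h hh => hmin h (filter_subset _ S hh)).trans (mul_le_mul_of_nonneg_left ?_ ?_)
      · exact log_max_div_le_sub hp hP (pairMass_nonneg hπ _)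
          (pairMass_filter_le_sub_sepMass hπ (q i) S a)
      · exact costOn_nonneg q hπ (fun k => (hc k).le) Tstar _
    calc costOn q c (.node i ch) π S
        = c i * mass π S + ∑ a : A, costOn q c (ch a) π (S.filter fun s => q i s = a) :=
          costOn_node q c i ch S
      _ ≤ D / P * OPT + ∑ a : A, costOn q c Tstar π (S.filter fun s => q i s = a) *
            (Real.log (P / (μ ^ 2 / 2)) - D / P) :=
          add_le_add hroot (sum_le_sum fun a _ => hchild a)
      _ = OPT * Real.log (max P (μ ^ 2 / 2) / (μ ^ 2 / 2)) := by
          rw [← sum_mul, sum_costOn_filter, max_eq_left (by linarith)]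
          ring

end Greedy

theorem greedy_subtree_bound_general [Fintype H] [Fintype A] [DecidableEq H] [DecidableEq A]
    (π : H → ℝ) (hπpos : ∀ h, 0 < π h)
    (q : Fin m → H → A) (c : Fin m → ℝ) (hc : ∀ i, 0 < c i)
    (Tstar : QTree m H A) (hTstar : ValidOn q Tstar Finset.univ)
    (S : Finset H) (hS : S.Nonempty)
    (Tg : QTree m H A) (hTg : IsGreedy q c π Tg S) :
    treeCost q c Tg (restrict π S) ≤
      12 * treeCost q c Tstar (restrict π S) *
        Real.log (mass π S / S.inf' hS π) := by
  set μ := S.inf' hS π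
  have hπ : ∀ h, 0 ≤ π h := fun h => (hπpos h).le
  have hμ : 0 < μ := (lt_inf'_iff hS).2 fun h _ => hπpos h
  have hmin : ∀ h ∈ S, μ ≤ π h := fun h hh => inf'_le π hh
  have hgreedy := costOn_greedy_le q c hπ hc hμ hTg (fun h _ => hTstar h (mem_univ h)) hmin
  have hlog_nonneg : 0 ≤ Real.log (mass π S / μ) :=
    Real.log_nonneg ((one_le_div hμ).2 (le_mass_of_forall_le hS hμ.le hmin))
  have hlog : Real.log (max (pairMass π S) (μ ^ 2 / 2) / (μ ^ 2 / 2)) ≤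
      12 * Real.log (mass π S / μ) := by
    linarith [log_max_pairMass_div_le hμ hS hmin]
  rw [treeCost_restrict, treeCost_restrict, mul_comm 12, mul_assoc, ← mul_div_right_comm]
  refine div_le_div_of_nonneg_right (hgreedy.trans ?_) (mass_nonneg hπ S)
  exact mul_le_mul_of_nonneg_left hlog (costOn_nonneg q hπ (fun i => (hc i).le) Tstar S)

/-- If `T*` is any query tree whose leaves are `H` and `T^g_S` is the greedy
subtree on a version space `S` arising in the greedy construction, then
`C(T^g_S, π_S) ≤ 12 · C(T*, π_S) · ln( π(S) / min_{h∈S} π(h) )`. -/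
theorem greedy_subtree_bound [Fintype H] [Fintype A] [DecidableEq H] [DecidableEq A]
    (π : H → ℝ) (hπpos : ∀ h, 0 < π h) (hπsum : ∑ h : H, π h = 1)
    (hH : 1 < Fintype.card H)
    (q : Fin m → H → A) (c : Fin m → ℝ) (hc : ∀ i, 0 < c i)
    (hdist : ∀ h h' : H, h ≠ h' → ∃ i : Fin m, q i h ≠ q i h')
    (Tstar : QTree m H A) (hTstar : ValidOn q Tstar Finset.univ)
    (S : Finset H) (hS : S.Nonempty)
    (Tg : QTree m H A) (hTg : IsGreedy q c π Tg S) :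
    treeCost q c Tg (restrict π S) ≤
      12 * treeCost q c Tstar (restrict π S) *
        Real.log (mass π S / S.inf' hS π) :=
  greedy_subtree_bound_general π hπpos q c hc Tstar hTstar S hS Tg hTg

end ActiveLearning
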